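/- arXiv:2412.05177 — 3 statements merged into one kernel-verified Lean document; each statement's English description precedes it below -/
import Mathlib

section
/- Let μ be a finite positive Radon Borel measure on K concentrated on ι(W), i.e. μ(K \ ι(W)) = 0 (the set ι(W) is a Gδ, hence Borel, subset of K). If ν is a finite positive Radon Borel measure on K whose pushforward under the quotient map q equals that of μ, i.e. q♯ν = q♯μ, then ν = μ. -/
/-!
A point of `W` is alone in its `∼`-class. Indeed, if `ζ ∼ ι(x, y)`, test `ζ` against elements of
`G` obtained by extending bounded functions on `W` to `βW`: the slopes `(f b - f a) / d(a, b)` of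
the 1-Lipschitz functions `f = min (d(·, z)) (d(x, y))`, which satisfy the `G`-inequality with
equality, and `1 / (1 + d(a, b))`, for which it is the subadditivity of `t ↦ t / (1 + t)`. Along
the trace on `W` of the neighbourhoods of `ζ`, these force `d(a, b) → d(x, y)`, then `a → x` and
`b → y`, so `ζ = ι(x, y)`.

Since `μ` lives on `ι(W)`, for compact `C` we get `ν C ≤ ν (q⁻¹ (q C)) = μ (q⁻¹ (q C)) ≤ μ C`.
Inner regularity of `ν` upgrades this to `ν ≤ μ`, and the total masses agree.
-/

open MeasureTheory

/-- `Wt M` is the set `W = {(x,y) ∈ M × M : x ≠ y}`, a topological subspace of `M × M`. -/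
abbrev Wt (M : Type*) [MetricSpace M] := {p : M × M // p.1 ≠ p.2}

/-- `g : W → ℝ` satisfies the G-inequality. -/
def GIneq {M : Type*} [MetricSpace M] (g : Wt M → ℝ) : Prop :=
  ∀ (x u y : M) (hxu : x ≠ u) (huy : u ≠ y) (hxy : x ≠ y),
    dist x y * g ⟨(x, y), hxy⟩ ≤ dist x u * g ⟨(x, u), hxu⟩ + dist u y * g ⟨(u, y), huy⟩

/-- The cone `G` of continuous functions on `K = βW` satisfying the G-inequality
on points of `W`. -/
def GSet (M : Type*) [MetricSpace M] : Set (StoneCech (Wt M) → ℝ) :=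
  {g | Continuous g ∧ GIneq fun p => g (stoneCechUnit p)}

/-- The Choquet-like quasi-order `μ ≼ ν`. -/
def Preceq {M : Type*} [MetricSpace M] [MeasurableSpace (StoneCech (Wt M))]
    (μ ν : Measure (StoneCech (Wt M))) : Prop :=
  ∀ g ∈ GSet M, ∫ ζ, g ζ ∂μ ≤ ∫ ζ, g ζ ∂ν

/-- `μ` is `≼`-minimal among finite positive Radon Borel measures. -/
def IsMinimal {M : Type*} [MetricSpace M] [MeasurableSpace (StoneCech (Wt M))]
    (μ : Measure (StoneCech (Wt M))) : Prop :=
  ∀ ν : Measure (StoneCech (Wt M)),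
    IsFiniteMeasure ν → ν.InnerRegular → Preceq ν μ → Preceq μ ν

/-- The equivalence relation `ζ ∼ ω` iff `g ζ = g ω` for all `g ∈ G`. -/
def gSetoid (M : Type*) [MetricSpace M] : Setoid (StoneCech (Wt M)) where
  r ζ ω := ∀ g ∈ GSet M, g ζ = g ω
  iseqv := ⟨fun _ _ _ => rfl, fun h g hg => (h g hg).symm,
    fun h1 h2 g hg => (h1 g hg).trans (h2 g hg)⟩

/-- The quotient map `q : K → K/∼`. -/
def gq (M : Type*) [MetricSpace M] :
    StoneCech (Wt M) → Quotient (gSetoid M) := Quotient.mk _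

open Filter Topology Set

theorem exists_continuous_extend_stoneCech_of_mem_Icc {X : Type*} [TopologicalSpace X]
    {h : X → ℝ} (hc : Continuous h) {l u : ℝ} (hb : ∀ x, h x ∈ Icc l u) :
    ∃ H : StoneCech X → ℝ, Continuous H ∧ ∀ x, H (stoneCechUnit x) = h x := by
  have : CompactSpace (Icc l u) := isCompact_iff_compactSpace.mp isCompact_Icc
  have hc' : Continuous (codRestrict h (Icc l u) hb) := hc.codRestrict hb
  exact ⟨fun ζ => ((stoneCechExtend hc' ζ : Icc l u) : ℝ),
    continuous_subtype_val.comp (continuous_stoneCechExtend hc'),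
    fun x => congrArg Subtype.val (stoneCechExtend_stoneCechUnit hc' x)⟩

theorem div_one_add_le_add_of_le_add {a b d : ℝ} (ha : 0 ≤ a) (hb : 0 ≤ b) (hd : 0 ≤ d)
    (h : d ≤ a + b) : d / (1 + d) ≤ a / (1 + a) + b / (1 + b) := by
  rw [div_add_div _ _ (by positivity) (by positivity),
    div_le_div_iff₀ (by positivity) (by positivity)]
  nlinarith [mul_nonneg ha hb, mul_nonneg (mul_nonneg ha hb) hd]

theorem tendsto_of_tendsto_min_dist_sub {α M : Type*} [PseudoMetricSpace M] {F : Filter α}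
    {a b : α → M} {x : M} {D : ℝ} (hD : 0 < D)
    (h : Tendsto (fun i => min (dist (b i) x) D - min (dist (a i) x) D) F (𝓝 D)) :
    Tendsto a F (𝓝 x) := by
  have hmin : Tendsto (fun i => min (dist (a i) x) D) F (𝓝 0) := by
    have hup : Tendsto (fun i => D - (min (dist (b i) x) D - min (dist (a i) x) D)) F (𝓝 0) := by
      simpa using (tendsto_const_nhds (x := D)).sub h
    refine tendsto_of_tendsto_of_tendsto_of_le_of_le tendsto_const_nhds hup
      (fun i => le_min dist_nonneg hD.le) (fun i => ?_)
    linarith [min_le_right (dist (b i) x) D]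
  refine tendsto_iff_dist_tendsto_zero.2 (hmin.congr' ?_)
  filter_upwards [hmin.eventually (eventually_lt_nhds hD)] with i hi
  exact min_eq_left (le_of_lt (by simpa using hi))

namespace Wt

variable {M : Type*} [MetricSpace M]

theorem dist_pos (w : Wt M) : 0 < dist w.1.1 w.1.2 := _root_.dist_pos.2 w.2

theorem continuous_dist : Continuous fun w : Wt M => dist w.1.1 w.1.2 :=
  (continuous_fst.comp continuous_subtype_val).dist (continuous_snd.comp continuous_subtype_val)

noncomputable def slope (f : M → ℝ) (w : Wt M) : ℝ := (f w.1.2 - f w.1.1) / dist w.1.1 w.1.2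

theorem slope_mul_dist (f : M → ℝ) (w : Wt M) :
    slope f w * dist w.1.1 w.1.2 = f w.1.2 - f w.1.1 :=
  div_mul_cancel₀ _ (Wt.dist_pos w).ne'

theorem gIneq_slope (f : M → ℝ) : GIneq (slope f) := by
  intro x u y hxu huy hxy
  simp only [slope]
  rw [mul_div_cancel₀ _ (_root_.dist_pos.2 hxy).ne', mul_div_cancel₀ _ (_root_.dist_pos.2 hxu).ne',
    mul_div_cancel₀ _ (_root_.dist_pos.2 huy).ne']
  linarith

theorem continuous_slope {f : M → ℝ} (hf : Continuous f) : Continuous (slope f) :=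
  ((hf.comp (continuous_snd.comp continuous_subtype_val)).sub
    (hf.comp (continuous_fst.comp continuous_subtype_val))).div continuous_dist
    fun w => (Wt.dist_pos w).ne'

theorem slope_mem_Icc {f : M → ℝ} (hf : LipschitzWith 1 f) (w : Wt M) :
    slope f w ∈ Icc (-1) 1 := by
  rw [mem_Icc, ← abs_le, slope, abs_div, abs_of_pos (Wt.dist_pos w), div_le_one (Wt.dist_pos w),
    ← Real.dist_eq, dist_comm w.1.1]
  simpa using hf.dist_le_mul w.1.2 w.1.1

noncomputable def invOneAddDist (w : Wt M) : ℝ := (1 + dist w.1.1 w.1.2)⁻¹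

theorem gIneq_invOneAddDist : GIneq (invOneAddDist (M := M)) := by
  intro x u y _ _ _
  simp only [invOneAddDist, ← div_eq_mul_inv]
  exact div_one_add_le_add_of_le_add dist_nonneg dist_nonneg dist_nonneg (dist_triangle x u y)

theorem continuous_invOneAddDist : Continuous (invOneAddDist (M := M)) :=
  (continuous_const.add continuous_dist).inv₀ fun w => (by positivity : (0 : ℝ) < 1 + _).ne'

theorem invOneAddDist_mem_Icc (w : Wt M) : invOneAddDist w ∈ Icc 0 1 :=
  ⟨by unfold invOneAddDist; positivity, inv_le_one_of_one_le₀ (by linarith [Wt.dist_pos w])⟩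

end Wt

section Separation

variable {M : Type*} [MetricSpace M]

theorem tendsto_comap_stoneCechUnit_of_forall_gSet_eq {p : Wt M} {ζ : StoneCech (Wt M)}
    (hrel : ∀ g ∈ GSet M, g ζ = g (stoneCechUnit p)) {h : Wt M → ℝ} (hc : Continuous h)
    {l u : ℝ} (hb : ∀ w, h w ∈ Icc l u) (hG : GIneq h) :
    Tendsto h (comap stoneCechUnit (𝓝 ζ)) (𝓝 (h p)) := by
  obtain ⟨H, hHc, hHh⟩ := exists_continuous_extend_stoneCech_of_mem_Icc hc hb
  have hH : H ∈ GSet M := ⟨hHc, by simpa only [hHh] using hG⟩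
  have hlim : Tendsto (H ∘ stoneCechUnit) (comap stoneCechUnit (𝓝 ζ)) (𝓝 (H ζ)) :=
    (hHc.tendsto ζ).comp tendsto_comap
  rwa [hrel H hH, hHh, show H ∘ stoneCechUnit = h from funext hHh] at hlim

theorem eq_stoneCechUnit_of_forall_gSet_eq {p : Wt M} {ζ : StoneCech (Wt M)}
    (hrel : ∀ g ∈ GSet M, g ζ = g (stoneCechUnit p)) : ζ = stoneCechUnit p := by
  obtain ⟨⟨x, y⟩, hxy⟩ := p
  set D := dist x y
  have hD : 0 < D := dist_pos.2 hxy
  set F := comap (stoneCechUnit : Wt M → StoneCech (Wt M)) (𝓝 ζ)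
  have hF : F.NeBot := isDenseInducing_stoneCechUnit.comap_nhds_neBot ζ
  have hdist : Tendsto (fun w : Wt M => dist w.1.1 w.1.2) F (𝓝 D) := by
    have h := tendsto_comap_stoneCechUnit_of_forall_gSet_eq hrel Wt.continuous_invOneAddDist
      Wt.invOneAddDist_mem_Icc Wt.gIneq_invOneAddDist
    simpa [Wt.invOneAddDist] using (h.inv₀ (by simp [Wt.invOneAddDist]; positivity)).sub_const 1
  let trunc (z : M) (m : M) : ℝ := min (dist m z) D
  have hslope (z : M) : Tendsto (fun w : Wt M => trunc z w.1.2 - trunc z w.1.1) F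
      (𝓝 (Wt.slope (trunc z) ⟨(x, y), hxy⟩ * D)) :=
    ((tendsto_comap_stoneCechUnit_of_forall_gSet_eq hrel
      (Wt.continuous_slope (continuous_id.dist continuous_const |>.min continuous_const))
      (Wt.slope_mem_Icc ((LipschitzWith.dist_left z).min_const D))
      (Wt.gIneq_slope _)).mul hdist).congr (Wt.slope_mul_dist _)
  have hfst : Tendsto (fun w : Wt M => w.1.1) F (𝓝 x) := by
    refine tendsto_of_tendsto_min_dist_sub hD ((hslope x).trans_eq ?_)
    simp [Wt.slope, trunc, D, hD.ne', dist_comm y x]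
  have hsnd : Tendsto (fun w : Wt M => w.1.2) F (𝓝 y) := by
    have h := (hslope y).neg
    simp only [neg_sub] at h
    refine tendsto_of_tendsto_min_dist_sub (b := fun w : Wt M => w.1.1) hD (h.trans_eq ?_)
    simp [Wt.slope, trunc, D, hD.ne']
  have hp : Tendsto id F (𝓝 (⟨(x, y), hxy⟩ : Wt M)) :=
    tendsto_subtype_rng.2 (hfst.prodMk_nhds hsnd)
  exact tendsto_nhds_unique (f := stoneCechUnit) tendsto_comap
    ((continuous_stoneCechUnit.tendsto _).comp hp)

instance : T2Space (Quotient (gSetoid M)) := by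
  refine ⟨Quotient.ind₂ fun ζ ω hne => ?_⟩
  obtain ⟨g, hg, hgne⟩ : ∃ g ∈ GSet M, g ζ ≠ g ω := by
    by_contra! h
    exact hne (Quotient.sound h)
  exact separated_by_continuous
    (hg.1.quotient_lift fun a b (h : ∀ g ∈ GSet M, g a = g b) => h g hg) hgne

end Separation

theorem MeasureTheory.Measure.eq_of_map_eq_of_ae_fiber_eq {X Y : Type*} [TopologicalSpace X]
    [MeasurableSpace X] [OpensMeasurableSpace X] [TopologicalSpace Y] [T2Space Y]
    [MeasurableSpace Y] [BorelSpace Y] {q : X → Y} (hq : Continuous q)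
    {μ ν : Measure X} [IsFiniteMeasure ν] [ν.InnerRegular]
    (hfib : ∀ᵐ x ∂μ, ∀ y, q y = q x → y = x) (hmap : ν.map q = μ.map q) : ν = μ := by
  have hq' := hq.measurable
  have hcompact (C : Set X) (hC : IsCompact C) : ν C ≤ μ C := by
    have hqC : MeasurableSet (q '' C) := (hC.image hq).isClosed.measurableSet
    calc ν C ≤ ν (q ⁻¹' (q '' C)) := measure_mono (subset_preimage_image q C)
      _ = μ (q ⁻¹' (q '' C)) := by rw [← map_apply hq' hqC, hmap, map_apply hq' hqC]
      _ ≤ μ C := measure_mono_ae <| hfib.mono fun x hx ⟨c, hc, hcx⟩ => hx c hcx ▸ hc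
  refine eq_of_le_of_measure_univ_eq (le_iff.2 fun A hA => ?_) ?_
  · rw [hA.measure_eq_iSup_isCompact ν]
    exact iSup₂_le fun C hCA => iSup_le fun hC => (hcompact C hC).trans (measure_mono hCA)
  · simpa [map_apply hq' MeasurableSet.univ] using congrArg (· univ) hmap

theorem stmt9_general {M : Type*} [MetricSpace M]
    [MeasurableSpace (StoneCech (Wt M))] [BorelSpace (StoneCech (Wt M))]
    [MeasurableSpace (Quotient (gSetoid M))] [BorelSpace (Quotient (gSetoid M))]
    (μ ν : Measure (StoneCech (Wt M)))
    [IsFiniteMeasure ν] [ν.InnerRegular]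
    (hconc : μ (Set.range (stoneCechUnit : Wt M → StoneCech (Wt M)))ᶜ = 0)
    (hmap : Measure.map (gq M) ν = Measure.map (gq M) μ) :
    ν = μ := by
  refine Measure.eq_of_map_eq_of_ae_fiber_eq continuous_quotient_mk' ?_ hmap
  filter_upwards [mem_ae_iff.2 hconc]
  rintro _ ⟨p, rfl⟩ ω hω
  exact eq_stoneCechUnit_of_forall_gSet_eq (Quotient.exact hω)

theorem stmt9 {M : Type*} [MetricSpace M]
    [MeasurableSpace (StoneCech (Wt M))] [BorelSpace (StoneCech (Wt M))]
    [MeasurableSpace (Quotient (gSetoid M))] [BorelSpace (Quotient (gSetoid M))]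
    (h3 : ∃ x y z : M, x ≠ y ∧ x ≠ z ∧ y ≠ z)
    (μ ν : Measure (StoneCech (Wt M)))
    [IsFiniteMeasure μ] [IsFiniteMeasure ν] [μ.InnerRegular] [ν.InnerRegular]
    (hconc : μ (Set.range (stoneCechUnit : Wt M → StoneCech (Wt M)))ᶜ = 0)
    (hmap : Measure.map (gq M) ν = Measure.map (gq M) μ) :
    ν = μ :=
  stmt9_general μ ν hconc hmap
end

section
/- Let μ be a nonzero finite positive Radon Borel measure on K, and let a, b ≥ 0. Say that Φ*μ = 0 if ∫ Φf dμ = 0 for every Lipschitz f : M → ℝ with f(0) = 0. Then: (i) if a·μ ≼ b·μ and Φ*μ ≠ 0, then a = b; (ii) Φ*μ = 0 if and only if 0 ≼ μ (i.e. ∫ g dμ ≥ 0 for every g ∈ G); (iii) if Φ*μ = 0, then a·μ ≼ b·μ if and only if a ≤ b. -/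
open MeasureTheory

/-- `Φ*μ = 0`: the De Leeuw transform of `μ` annihilates every base-point-normalised
Lipschitz function. -/
def PhiStarZero {M : Type*} [MetricSpace M] [MeasurableSpace (StoneCech (Wt M))]
    (basept : M) (μ : Measure (StoneCech (Wt M))) : Prop :=
  ∀ f : M → ℝ, (∃ C : NNReal, LipschitzWith C f) → f basept = 0 →
    ∀ F : StoneCech (Wt M) → ℝ, Continuous F →
      (∀ p : Wt M, F (stoneCechUnit p) = (f p.1.1 - f p.1.2) / dist p.1.1 p.1.2) →
      ∫ ζ, F ζ ∂μ = 0

/-!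
Both `Φf` and `-Φf = Φ(-f)` satisfy the G-inequality (with equality), so `μ ≼ ν` forces
`∫ Φf dμ = ∫ Φf dν`; this gives (i) and the backward direction of (ii). Conversely, for `g ∈ G`
the potential `f x = d(x,0) g(x,0)` is Lipschitz with `Φf ≤ g`: this is the G-inequality through
the base point, together with `g(x,y) + g(y,x) ≥ 0`, which is the G-inequality through a third
point. Hence `∫ g dμ ≥ ∫ Φf dμ = 0` whenever `Φ*μ = 0`. For (iii), test `a • μ ≼ b • μ` against
the constant `1 ∈ G` (the triangle inequality); the converse follows from (ii).
-/

lemma exists_continuous_stoneCech_extension_of_abs_le {X : Type*} [TopologicalSpace X]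
    {φ : X → ℝ} (hφ : Continuous φ) {C : ℝ} (hC : ∀ x, |φ x| ≤ C) :
    ∃ F : StoneCech X → ℝ, Continuous F ∧ ∀ x, F (stoneCechUnit x) = φ x := by
  let φ' : X → Set.Icc (-C) C := fun x => ⟨φ x, abs_le.1 (hC x)⟩
  have hφ' : Continuous φ' := hφ.subtype_mk _
  exact ⟨fun ζ => (stoneCechExtend hφ' ζ : Set.Icc (-C) C),
    continuous_subtype_val.comp (continuous_stoneCechExtend hφ'),
    fun x => congrArg Subtype.val (stoneCechExtend_stoneCechUnit hφ' x)⟩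

lemma exists_ne_ne_of_three {α : Type*} (h3 : ∃ x y z : α, x ≠ y ∧ x ≠ z ∧ y ≠ z) (a b : α) :
    ∃ c, c ≠ a ∧ c ≠ b := by
  obtain ⟨p, q, r, hpq, hpr, hqr⟩ := h3
  by_contra! h
  rcases eq_or_ne p a with rfl | hpa
  · exact hqr ((h q hpq.symm).trans (h r hpr.symm).symm)
  rcases eq_or_ne q a with rfl | hqa
  · exact hpr ((h p hpa).trans (h r hqr.symm).symm)
  · exact hpq ((h p hpa).trans (h q hqa).symm)

section DeLeeuw

variable {M : Type*} [MetricSpace M]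

/-- The De Leeuw transform `Φf`, as a function on `W`. -/
noncomputable def deLeeuw (f : M → ℝ) (p : Wt M) : ℝ := (f p.1.1 - f p.1.2) / dist p.1.1 p.1.2

lemma dist_mul_deLeeuw (f : M → ℝ) {x y : M} (hxy : x ≠ y) :
    dist x y * deLeeuw f ⟨(x, y), hxy⟩ = f x - f y :=
  mul_div_cancel₀ _ (dist_ne_zero.2 hxy)

lemma gIneq_deLeeuw (f : M → ℝ) : GIneq (deLeeuw f) := by
  intro x u y hxu huy hxy
  rw [dist_mul_deLeeuw, dist_mul_deLeeuw, dist_mul_deLeeuw]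
  linarith

lemma deLeeuw_neg (f : M → ℝ) (p : Wt M) : deLeeuw (-f) p = -deLeeuw f p := by
  simp only [deLeeuw, Pi.neg_apply, neg_sub_neg, ← neg_div, neg_sub]

lemma LipschitzWith.abs_deLeeuw_le {K : NNReal} {f : M → ℝ} (hf : LipschitzWith K f)
    (p : Wt M) : |deLeeuw f p| ≤ K := by
  rw [deLeeuw, abs_div, abs_of_pos (dist_pos.2 p.2), div_le_iff₀ (dist_pos.2 p.2)]
  exact hf.dist_le_mul p.1.1 p.1.2

lemma Continuous.deLeeuw {f : M → ℝ} (hf : Continuous f) : Continuous (deLeeuw f) :=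
  ((hf.comp (continuous_fst.comp continuous_subtype_val)).sub
    (hf.comp (continuous_snd.comp continuous_subtype_val))).div
    (continuous_fst.comp continuous_subtype_val |>.dist
      (continuous_snd.comp continuous_subtype_val))
    fun p => dist_ne_zero.2 p.2

lemma LipschitzWith.exists_stoneCech_deLeeuw {K : NNReal} {f : M → ℝ} (hf : LipschitzWith K f) :
    ∃ F : StoneCech (Wt M) → ℝ, Continuous F ∧ ∀ p, F (stoneCechUnit p) = deLeeuw f p :=
  exists_continuous_stoneCech_extension_of_abs_le hf.continuous.deLeeuw hf.abs_deLeeuw_le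

lemma GIneq.add_swap_nonneg {g : Wt M → ℝ} (hg : GIneq g) {x y z : M} (hxy : x ≠ y)
    (hzx : z ≠ x) (hzy : z ≠ y) : 0 ≤ g ⟨(x, y), hxy⟩ + g ⟨(y, x), hxy.symm⟩ := by
  have h₁ := hg x y z hxy hzy.symm hzx.symm
  have h₂ := hg y x z hxy.symm hzx.symm hzy.symm
  rw [dist_comm y x] at h₂
  have : 0 ≤ dist x y * (g ⟨(x, y), hxy⟩ + g ⟨(y, x), hxy.symm⟩) := by linarith
  exact nonneg_of_mul_nonneg_right this (dist_pos.2 hxy)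

open Classical in
noncomputable def potential (g : Wt M → ℝ) (o x : M) : ℝ :=
  if h : x = o then 0 else dist x o * g ⟨(x, o), h⟩

@[simp]
lemma potential_self (g : Wt M → ℝ) (o : M) : potential g o o = 0 := by
  simp [potential]

lemma GIneq.potential_sub_le (h3 : ∃ x y z : M, x ≠ y ∧ x ≠ z ∧ y ≠ z) {g : Wt M → ℝ}
    (hg : GIneq g) (o : M) {x y : M} (hxy : x ≠ y) :
    potential g o x - potential g o y ≤ dist x y * g ⟨(x, y), hxy⟩ := by
  by_cases hyo : y = o
  · subst hyo
    rw [potential, potential, dif_neg hxy, dif_pos rfl, sub_zero]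
  by_cases hxo : x = o
  · subst hxo
    obtain ⟨z, hzx, hzy⟩ := exists_ne_ne_of_three h3 x y
    have := mul_nonneg (dist_nonneg (x := x) (y := y)) (hg.add_swap_nonneg hxy hzx hzy)
    rw [potential, potential, dif_pos rfl, dif_neg hyo, dist_comm y x]
    linarith
  rw [potential, potential, dif_neg hxo, dif_neg hyo]
  linarith [hg x y o hxy hyo hxo]

lemma GIneq.deLeeuw_potential_le (h3 : ∃ x y z : M, x ≠ y ∧ x ≠ z ∧ y ≠ z) {g : Wt M → ℝ}
    (hg : GIneq g) (o : M) (p : Wt M) : deLeeuw (potential g o) p ≤ g p :=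
  (div_le_iff₀' (dist_pos.2 p.2)).2 (hg.potential_sub_le h3 o p.2)

lemma GIneq.lipschitzWith_potential (h3 : ∃ x y z : M, x ≠ y ∧ x ≠ z ∧ y ≠ z) {g : Wt M → ℝ}
    (hg : GIneq g) (o : M) {C : ℝ} (hC : ∀ p, g p ≤ C) :
    LipschitzWith C.toNNReal (potential g o) := by
  refine LipschitzWith.of_le_add_mul' C fun x y => ?_
  rcases eq_or_ne x y with rfl | hxy
  · simp
  have := hg.potential_sub_le h3 o hxy
  have := mul_le_mul_of_nonneg_left (hC ⟨(x, y), hxy⟩) (dist_nonneg (x := x) (y := y))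
  linarith

lemma mem_GSet_of_deLeeuw {f : M → ℝ} {F : StoneCech (Wt M) → ℝ} (hF : Continuous F)
    (hFf : ∀ p, F (stoneCechUnit p) = deLeeuw f p) : F ∈ GSet M := by
  refine ⟨hF, ?_⟩
  simpa only [hFf] using gIneq_deLeeuw f

lemma one_mem_GSet : (fun _ => 1 : StoneCech (Wt M) → ℝ) ∈ GSet M :=
  ⟨continuous_const, fun x u y _ _ _ => by simpa only [mul_one] using dist_triangle x u y⟩

section Measures

variable [MeasurableSpace (StoneCech (Wt M))]

lemma Preceq.integral_eq_of_deLeeuw {μ ν : Measure (StoneCech (Wt M))} (h : Preceq μ ν)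
    {f : M → ℝ} {F : StoneCech (Wt M) → ℝ} (hF : Continuous F)
    (hFf : ∀ p, F (stoneCechUnit p) = deLeeuw f p) : ∫ ζ, F ζ ∂μ = ∫ ζ, F ζ ∂ν := by
  have hneg : -F ∈ GSet M :=
    mem_GSet_of_deLeeuw (f := -f) hF.neg fun p => by rw [deLeeuw_neg, Pi.neg_apply, hFf]
  have := h _ hneg
  simp only [Pi.neg_apply, integral_neg, neg_le_neg_iff] at this
  exact (h F (mem_GSet_of_deLeeuw hF hFf)).antisymm this

lemma integral_nonneg_of_phiStarZero [BorelSpace (StoneCech (Wt M))]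
    (h3 : ∃ x y z : M, x ≠ y ∧ x ≠ z ∧ y ≠ z) (o : M) {μ : Measure (StoneCech (Wt M))}
    [IsFiniteMeasure μ] (hμ : PhiStarZero o μ)
    {g : StoneCech (Wt M) → ℝ} (hg : g ∈ GSet M) : 0 ≤ ∫ ζ, g ζ ∂μ := by
  obtain ⟨hgc, hgi⟩ := hg
  obtain ⟨C, hC⟩ := (isCompact_range hgc).bddAbove
  have hf := hgi.lipschitzWith_potential h3 o fun p => hC ⟨_, rfl⟩
  obtain ⟨F, hFc, hF⟩ := hf.exists_stoneCech_deLeeuw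
  have hFg : ∀ ζ, F ζ ≤ g ζ := fun ζ =>
    denseRange_stoneCechUnit.induction_on ζ (isClosed_le hFc hgc) fun p =>
      (hF p).trans_le (hgi.deLeeuw_potential_le h3 o p)
  calc 0 = ∫ ζ, F ζ ∂μ := (hμ _ ⟨_, hf⟩ (potential_self _ o) F hFc hF).symm
    _ ≤ ∫ ζ, g ζ ∂μ :=
      integral_mono (hFc.integrable_of_hasCompactSupport (.of_compactSpace F))
        (hgc.integrable_of_hasCompactSupport (.of_compactSpace g)) hFg

end Measures

end DeLeeuw

theorem stmt12_general {M : Type*} [MetricSpace M]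
    [MeasurableSpace (StoneCech (Wt M))] [BorelSpace (StoneCech (Wt M))]
    (basept : M) (h3 : ∃ x y z : M, x ≠ y ∧ x ≠ z ∧ y ≠ z)
    (μ : Measure (StoneCech (Wt M))) [IsFiniteMeasure μ]
    (hμ : μ ≠ 0) (a b : NNReal) :
    (Preceq (a • μ) (b • μ) → ¬ PhiStarZero basept μ → a = b) ∧
    (PhiStarZero basept μ ↔ Preceq 0 μ) ∧
    (PhiStarZero basept μ → (Preceq (a • μ) (b • μ) ↔ a ≤ b)) := by
  refine ⟨fun hab hΦ => ?_, ⟨fun hΦ g hg => ?_, fun h0 f _ _ F hF hFf => ?_⟩,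
    fun hΦ => ⟨fun hab => ?_, fun hab g hg => ?_⟩⟩
  · simp only [PhiStarZero, not_forall] at hΦ
    obtain ⟨f, -, -, F, hF, hFf, hne⟩ := hΦ
    have := hab.integral_eq_of_deLeeuw hF hFf
    simp only [integral_smul_nnreal_measure, NNReal.smul_def, smul_eq_mul] at this
    exact_mod_cast mul_right_cancel₀ hne this
  · simpa using integral_nonneg_of_phiStarZero h3 basept hΦ hg
  · simpa using (h0.integral_eq_of_deLeeuw hF hFf).symm
  · have := hab _ one_mem_GSet
    have hpos : 0 < μ.real Set.univ := by
      simpa [measureReal_def, ENNReal.toReal_pos_iff] using hμ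
    rw [integral_smul_nnreal_measure, integral_smul_nnreal_measure] at this
    simp only [integral_const, smul_eq_mul, mul_one, NNReal.smul_def] at this
    exact_mod_cast le_of_mul_le_mul_right this hpos
  · simp only [integral_smul_nnreal_measure, NNReal.smul_def, smul_eq_mul]
    exact mul_le_mul_of_nonneg_right hab (integral_nonneg_of_phiStarZero h3 basept hΦ hg)

theorem stmt12 {M : Type*} [MetricSpace M]
    [MeasurableSpace (StoneCech (Wt M))] [BorelSpace (StoneCech (Wt M))]
    (basept : M) (h3 : ∃ x y z : M, x ≠ y ∧ x ≠ z ∧ y ≠ z)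
    (μ : Measure (StoneCech (Wt M))) [IsFiniteMeasure μ] [μ.InnerRegular]
    (hμ : μ ≠ 0) (a b : NNReal) :
    (Preceq (a • μ) (b • μ) → ¬ PhiStarZero basept μ → a = b) ∧
    (PhiStarZero basept μ ↔ Preceq 0 μ) ∧
    (PhiStarZero basept μ → (Preceq (a • μ) (b • μ) ↔ a ≤ b)) :=
  stmt12_general basept h3 μ hμ a b
end

section
/- Let μ be a finite positive Radon Borel measure on K. Then μ is minimal if and only if for every continuous function f : K → ℝ that is constant on all fibres of the quotient map q (i.e. f(ζ) = f(ω) whenever g(ζ) = g(ω) for all g ∈ G), one has ∫ f dμ = inf { ∫ g dμ : g ∈ G, f ≤ g pointwise on K }. -/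
/-!
Write `p f = inf {∫ g dμ : g ∈ G, f ≤ g}`; on continuous functions `p` is sublinear and dominates
`∫ · dμ`. If `μ` is minimal and `f` is constant on the fibres of `q`, Hahn–Banach gives a linear
`L ≤ p` with `L f = p f`. It is positive because `p ≤ 0` on nonpositive functions, so by the
Riesz–Markov–Kakutani theorem `L` is integration against a Radon measure `ν`, and `ν ≼ μ` since
`L ≤ p`. Minimality makes `μ` and `ν` agree on `G`, hence on `G - G`. As `G` is a convex cone that
contains the constants and is closed under `⊔`, the functions of `G - G` form a lattice that
separates the points of `K/∼` strongly, so by the lattice Stone–Weierstrass theorem they are dense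
in `C(K/∼)`. Therefore `∫ f dμ = ∫ f dν = L f = p f`. Conversely, the formula for `f = -g` with
`g ∈ G` says `-∫ g dμ = p (-g) ≥ -∫ g dν` whenever `ν ≼ μ`.
-/

open MeasureTheory

open Set Topology CompactlySupported CompactlySupportedContinuousMap
open scoped Pointwise

theorem exists_linearMap_eq_le_sublinear {E : Type*} [AddCommGroup E] [Module ℝ E] (N : E → ℝ)
    (N_hom : ∀ c : ℝ, 0 < c → ∀ x, N (c • x) = c * N x) (N_add : ∀ x y, N (x + y) ≤ N x + N y)
    (x : E) : ∃ g : E →ₗ[ℝ] ℝ, g x = N x ∧ ∀ y, g y ≤ N y := by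
  have N_zero : N 0 = 0 := by
    have h := N_hom 2 two_pos 0
    rw [smul_zero] at h
    linarith
  have hx : ∀ c : ℝ, c • x = 0 → c • N x = 0 := by
    intro c hc
    rcases smul_eq_zero.1 hc with rfl | rfl
    · exact zero_smul ℝ _
    · rw [N_zero, smul_zero]
  let f := LinearPMap.mkSpanSingleton' (σ := RingHom.id ℝ) x (N x) hx
  have hle : ∀ y : f.domain, f y ≤ N y := by
    rintro ⟨y, hy⟩
    obtain ⟨c, rfl⟩ := Submodule.mem_span_singleton.1 hy
    rw [show f ⟨c • x, hy⟩ = c * N x from LinearPMap.mkSpanSingleton'_apply x (N x) hx c hy]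
    change c * N x ≤ N (c • x)
    rcases lt_trichotomy c 0 with hc | rfl | hc
    · -- `N` is subadditive, so `0 = N 0 ≤ N (c • x) + N (-c • x)`
      have h := N_add (c • x) ((-c) • x)
      rw [← add_smul, add_neg_cancel, zero_smul, N_zero, N_hom (-c) (neg_pos.2 hc)] at h
      linarith
    · rw [zero_mul, zero_smul, N_zero]
    · rw [N_hom c hc]
  obtain ⟨g, hg, hgN⟩ := exists_extension_of_le_sublinear _ N N_hom N_add hle
  exact ⟨g, (hg ⟨x, Submodule.mem_span_singleton_self x⟩).trans
    (LinearPMap.mkSpanSingleton'_apply_self _ _ _ _), hgN⟩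

section LatticeOrderedGroup

variable {α : Type*} [Lattice α] [AddCommGroup α] [AddLeftMono α] {S : Set α}

theorem Set.sup_mem_sub_self (hadd : ∀ a ∈ S, ∀ b ∈ S, a + b ∈ S)
    (hsup : ∀ a ∈ S, ∀ b ∈ S, a ⊔ b ∈ S) {x y : α} (hx : x ∈ S - S) (hy : y ∈ S - S) :
    x ⊔ y ∈ S - S := by
  obtain ⟨a, ha, b, hb, rfl⟩ := Set.mem_sub.1 hx
  obtain ⟨c, hc, d, hd, rfl⟩ := Set.mem_sub.1 hy
  refine Set.mem_sub.2 ⟨(a + d) ⊔ (c + b), hsup _ (hadd a ha d hd) _ (hadd c hc b hb), b + d,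
    hadd b hb d hd, ?_⟩
  rw [sup_sub]
  congr 1 <;> abel

theorem Set.inf_mem_sub_self (hadd : ∀ a ∈ S, ∀ b ∈ S, a + b ∈ S)
    (hsup : ∀ a ∈ S, ∀ b ∈ S, a ⊔ b ∈ S) {x y : α} (hx : x ∈ S - S) (hy : y ∈ S - S) :
    x ⊓ y ∈ S - S := by
  obtain ⟨a, ha, b, hb, rfl⟩ := Set.mem_sub.1 hx
  obtain ⟨c, hc, d, hd, rfl⟩ := Set.mem_sub.1 hy
  refine Set.mem_sub.2 ⟨a + c, hadd a ha c hc, (b + c) ⊔ (a + d),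
    hsup _ (hadd b hb c hc) _ (hadd a ha d hd), ?_⟩
  rw [sub_sup]
  congr 1 <;> abel

end LatticeOrderedGroup

section CompactSpace

variable {X : Type*} [TopologicalSpace X] [CompactSpace X] [MeasurableSpace X]
  [OpensMeasurableSpace X] (μ : Measure X) [IsFiniteMeasure μ]

theorem Continuous.integrable_of_compactSpace {f : X → ℝ} (hf : Continuous f) : Integrable f μ :=
  hf.integrable_of_hasCompactSupport (HasCompactSupport.of_compactSpace f)

theorem ContinuousMap.continuous_integral : Continuous fun φ : C(X, ℝ) => ∫ x, φ x ∂μ := by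
  let I : C(X, ℝ) →+ ℝ :=
    { toFun φ := ∫ x, φ x ∂μ
      map_zero' := integral_zero X ℝ
      map_add' φ ψ := integral_add (φ.continuous.integrable_of_compactSpace μ)
        (ψ.continuous.integrable_of_compactSpace μ) }
  refine AddMonoidHomClass.continuous_of_bound I (μ.real univ) fun φ => ?_
  rw [mul_comm]
  exact norm_integral_le_of_norm_le_const (.of_forall φ.norm_coe_le_norm)

end CompactSpace

section

variable {M : Type*} [MetricSpace M]

theorem const_mem_GSet {c : ℝ} (hc : 0 ≤ c) : (fun _ : StoneCech (Wt M) => c) ∈ GSet M := by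
  refine ⟨continuous_const, fun x u y _ _ _ => ?_⟩
  rw [← add_mul]
  exact mul_le_mul_of_nonneg_right (dist_triangle x u y) hc

theorem add_mem_GSet {g₁ g₂ : StoneCech (Wt M) → ℝ} (h₁ : g₁ ∈ GSet M) (h₂ : g₂ ∈ GSet M) :
    g₁ + g₂ ∈ GSet M := by
  refine ⟨h₁.1.add h₂.1, fun x u y hxu huy hxy => ?_⟩
  simp only [Pi.add_apply, mul_add]
  linarith [h₁.2 x u y hxu huy hxy, h₂.2 x u y hxu huy hxy]

theorem smul_mem_GSet {c : ℝ} (hc : 0 ≤ c) {g : StoneCech (Wt M) → ℝ} (hg : g ∈ GSet M) :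
    c • g ∈ GSet M := by
  refine ⟨hg.1.const_smul c, fun x u y hxu huy hxy => ?_⟩
  simp only [Pi.smul_apply, smul_eq_mul]
  nlinarith [hg.2 x u y hxu huy hxy]

theorem sup_mem_GSet {g₁ g₂ : StoneCech (Wt M) → ℝ} (h₁ : g₁ ∈ GSet M) (h₂ : g₂ ∈ GSet M) :
    g₁ ⊔ g₂ ∈ GSet M := by
  refine ⟨h₁.1.max h₂.1, fun x u y hxu huy hxy => ?_⟩
  simp only [Pi.sup_apply]
  rw [mul_max_of_nonneg _ _ dist_nonneg]
  refine max_le ((h₁.2 x u y hxu huy hxy).trans ?_) ((h₂.2 x u y hxu huy hxy).trans ?_) <;>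
    gcongr <;> simp

theorem zero_mem_GSet : (0 : StoneCech (Wt M) → ℝ) ∈ GSet M :=
  const_mem_GSet le_rfl

theorem affine_mem_GSet_sub {g : StoneCech (Wt M) → ℝ} (hg : g ∈ GSet M) (a b : ℝ) :
    (fun ζ => a * g ζ + b) ∈ GSet M - GSet M := by
  refine Set.mem_sub.2 ⟨a⁺ • g + fun _ => b⁺, add_mem_GSet (smul_mem_GSet (posPart_nonneg a) hg)
    (const_mem_GSet (posPart_nonneg b)), a⁻ • g + fun _ => b⁻,
    add_mem_GSet (smul_mem_GSet (negPart_nonneg a) hg) (const_mem_GSet (negPart_nonneg b)), ?_⟩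
  ext ζ
  simp only [Pi.sub_apply, Pi.add_apply, Pi.smul_apply, smul_eq_mul]
  linear_combination g ζ * posPart_sub_negPart a + posPart_sub_negPart b

theorem closure_GSet_sub_comp_gq_eq_top :
    closure {h : C(Quotient (gSetoid M), ℝ) | ⇑h ∘ gq M ∈ GSet M - GSet M} = ⊤ := by
  refine ContinuousMap.sublattice_closure_eq_top _
    ⟨0, 0, zero_mem_GSet, 0, zero_mem_GSet, sub_zero _⟩
    (fun h hh k hk => Set.inf_mem_sub_self (fun _ ha _ hb => add_mem_GSet ha hb)
      (fun _ ha _ hb => sup_mem_GSet ha hb) hh hk)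
    (fun h hh k hk => Set.sup_mem_sub_self (fun _ ha _ hb => add_mem_GSet ha hb)
      (fun _ ha _ hb => sup_mem_GSet ha hb) hh hk) ?_
  intro v x y
  induction x using Quotient.inductionOn with | h ζ => ?_
  induction y using Quotient.inductionOn with | h ω => ?_
  by_cases hζω : ∀ g ∈ GSet M, g ζ = g ω
  · have hxy : (⟦ζ⟧ : Quotient (gSetoid M)) = ⟦ω⟧ := Quotient.sound hζω
    refine ⟨ContinuousMap.const _ (v ⟦ζ⟧), ?_, rfl, by simp [hxy]⟩
    have h := affine_mem_GSet_sub (zero_mem_GSet (M := M)) 0 (v ⟦ζ⟧)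
    simp only [Pi.zero_apply, mul_zero, zero_add] at h
    exact h
  push Not at hζω
  obtain ⟨g, hg, hne⟩ := hζω
  set a := (v ⟦ζ⟧ - v ⟦ω⟧) / (g ζ - g ω)
  set b := v ⟦ζ⟧ - a * g ζ
  have hg' : ∀ ζ ω, (∀ g ∈ GSet M, g ζ = g ω) → g ζ = g ω := fun _ _ h => h g hg
  refine ⟨⟨fun z => a * Quotient.lift g hg' z + b, by
    have := hg.1.quotient_lift (s := gSetoid M) hg'; fun_prop⟩, affine_mem_GSet_sub hg a b, ?_, ?_⟩
  · change a * g ζ + b = v ⟦ζ⟧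
    ring
  · change a * g ω + b = v ⟦ω⟧
    have : g ζ - g ω ≠ 0 := sub_ne_zero.2 hne
    simp only [b, a]
    field_simp
    ring

section Measure

variable [MeasurableSpace (StoneCech (Wt M))]

noncomputable def upperIntegral (μ : Measure (StoneCech (Wt M))) (f : StoneCech (Wt M) → ℝ) : ℝ :=
  sInf {r : ℝ | ∃ g ∈ GSet M, (∀ ζ, f ζ ≤ g ζ) ∧ r = ∫ ζ, g ζ ∂μ}

variable (μ : Measure (StoneCech (Wt M))) {f f' : StoneCech (Wt M) → ℝ}

theorem upperIntegral_set_nonempty (hf : Continuous f) :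
    {r : ℝ | ∃ g ∈ GSet M, (∀ ζ, f ζ ≤ g ζ) ∧ r = ∫ ζ, g ζ ∂μ}.Nonempty := by
  obtain ⟨c, hc⟩ := (isCompact_range hf).bddAbove
  exact ⟨_, _, const_mem_GSet (le_max_right c 0),
    fun ζ => (hc (mem_range_self ζ)).trans (le_max_left c 0), rfl⟩

theorem upperIntegral_smul {c : ℝ} (hc : 0 < c) :
    upperIntegral μ (c • f) = c * upperIntegral μ f := by
  rw [upperIntegral, upperIntegral, ← smul_eq_mul, ← Real.sInf_smul_of_nonneg hc.le]
  congr 1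
  ext r
  rw [Set.mem_smul_set]
  constructor
  · rintro ⟨g, hg, hfg, rfl⟩
    refine ⟨_, ⟨c⁻¹ • g, smul_mem_GSet (inv_nonneg.2 hc.le) hg, fun ζ => ?_, rfl⟩, ?_⟩
    · simpa [le_inv_mul_iff₀ hc] using hfg ζ
    · simp only [Pi.smul_apply, smul_eq_mul, integral_const_mul, mul_inv_cancel_left₀ hc.ne']
  · rintro ⟨_, ⟨g, hg, hfg, rfl⟩, rfl⟩
    exact ⟨c • g, smul_mem_GSet hc.le hg, fun ζ => by simpa [hc] using hfg ζ,
      by simp only [Pi.smul_apply, smul_eq_mul, integral_const_mul]⟩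

variable [OpensMeasurableSpace (StoneCech (Wt M))]

theorem integral_le_upperIntegral {ν : Measure (StoneCech (Wt M))} [IsFiniteMeasure ν]
    (hνμ : Preceq ν μ) (hf : Continuous f) : ∫ ζ, f ζ ∂ν ≤ upperIntegral μ f := by
  refine le_csInf (upperIntegral_set_nonempty μ hf) ?_
  rintro r ⟨g, hg, hfg, rfl⟩
  exact (integral_mono (hf.integrable_of_compactSpace ν) (hg.1.integrable_of_compactSpace ν)
    hfg).trans (hνμ g hg)

variable [IsFiniteMeasure μ]

theorem upperIntegral_le {g : StoneCech (Wt M) → ℝ} (hf : Continuous f) (hg : g ∈ GSet M)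
    (hfg : ∀ ζ, f ζ ≤ g ζ) : upperIntegral μ f ≤ ∫ ζ, g ζ ∂μ :=
  csInf_le ⟨∫ ζ, f ζ ∂μ, fun _ ⟨_, hg', hfg', hr⟩ => hr ▸
    integral_mono (hf.integrable_of_compactSpace μ) (hg'.1.integrable_of_compactSpace μ) hfg'⟩
    ⟨g, hg, hfg, rfl⟩

theorem upperIntegral_add_le (hf : Continuous f) (hf' : Continuous f') :
    upperIntegral μ (f + f') ≤ upperIntegral μ f + upperIntegral μ f' := by
  refine le_of_forall_pos_le_add fun ε hε => ?_
  obtain ⟨_, ⟨g, hg, hfg, rfl⟩, hgε⟩ := exists_lt_of_csInf_lt (upperIntegral_set_nonempty μ hf)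
    (lt_add_of_pos_right (upperIntegral μ f) (half_pos hε))
  obtain ⟨_, ⟨g', hg', hfg', rfl⟩, hg'ε⟩ := exists_lt_of_csInf_lt
    (upperIntegral_set_nonempty μ hf') (lt_add_of_pos_right (upperIntegral μ f') (half_pos hε))
  have h : upperIntegral μ (f + f') ≤ ∫ ζ, (g + g') ζ ∂μ :=
    upperIntegral_le μ (hf.add hf') (add_mem_GSet hg hg') fun ζ => add_le_add (hfg ζ) (hfg' ζ)
  rw [integral_add' (hg.1.integrable_of_compactSpace μ)
    (hg'.1.integrable_of_compactSpace μ)] at h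
  linarith

theorem integral_eq_of_integral_GSet_eq {ν : Measure (StoneCech (Wt M))} [IsFiniteMeasure ν]
    (hμν : ∀ g ∈ GSet M, ∫ ζ, g ζ ∂μ = ∫ ζ, g ζ ∂ν) (hf : Continuous f)
    (hconst : ∀ ζ ω, (∀ g ∈ GSet M, g ζ = g ω) → f ζ = f ω) :
    ∫ ζ, f ζ ∂μ = ∫ ζ, f ζ ∂ν := by
  let q : C(StoneCech (Wt M), Quotient (gSetoid M)) := ⟨gq M, continuous_quotient_mk'⟩
  let T := {h : C(Quotient (gSetoid M), ℝ) | ∫ ζ, h (q ζ) ∂μ = ∫ ζ, h (q ζ) ∂ν}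
  have hq := (ContinuousMap.compRightContinuousMap ℝ q).continuous
  have hT : IsClosed T := isClosed_eq ((ContinuousMap.continuous_integral μ).comp hq)
    ((ContinuousMap.continuous_integral ν).comp hq)
  have hGT : {h : C(Quotient (gSetoid M), ℝ) | ⇑h ∘ gq M ∈ GSet M - GSet M} ⊆ T := by
    intro h hh
    obtain ⟨g₁, hg₁, g₂, hg₂, hh⟩ := Set.mem_sub.1 hh
    change ∫ ζ, (⇑h ∘ gq M) ζ ∂μ = ∫ ζ, (⇑h ∘ gq M) ζ ∂ν
    rw [← hh]
    simp only [Pi.sub_apply]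
    rw [integral_sub (hg₁.1.integrable_of_compactSpace μ) (hg₂.1.integrable_of_compactSpace μ),
      integral_sub (hg₁.1.integrable_of_compactSpace ν) (hg₂.1.integrable_of_compactSpace ν),
      hμν g₁ hg₁, hμν g₂ hg₂]
  exact closure_minimal hGT hT <| (closure_GSet_sub_comp_gq_eq_top (M := M)).ge <|
    mem_univ (⟨_, hf.quotient_lift hconst⟩ : C(Quotient (gSetoid M), ℝ))

theorem exists_preceq_integral_eq_upperIntegral [BorelSpace (StoneCech (Wt M))]
    (hf : Continuous f) :
    ∃ ν : Measure (StoneCech (Wt M)), IsFiniteMeasure ν ∧ ν.InnerRegular ∧ Preceq ν μ ∧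
      ∫ ζ, f ζ ∂ν = upperIntegral μ f := by
  obtain ⟨L, hLf, hLN⟩ := exists_linearMap_eq_le_sublinear
    (fun φ : C_c(StoneCech (Wt M), ℝ) => upperIntegral μ φ)
    (fun c hc φ => upperIntegral_smul μ hc)
    (fun φ ψ => upperIntegral_add_le μ φ.continuous ψ.continuous)
    (continuousMapEquiv ⟨f, hf⟩)
  have hL_nonneg : ∀ φ, 0 ≤ φ → 0 ≤ L φ := by
    intro φ hφ
    have h := (hLN (-φ)).trans (upperIntegral_le μ (-φ).continuous zero_mem_GSet
      fun ζ => neg_nonpos.2 (le_def.1 hφ ζ))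
    rw [map_neg] at h
    simpa using h
  let Λ := PositiveLinearMap.mk₀ L hL_nonneg
  refine ⟨RealRMK.rieszMeasure Λ, inferInstance, inferInstance, fun g hg => ?_,
    (RealRMK.integral_rieszMeasure Λ _).trans hLf⟩
  calc ∫ ζ, g ζ ∂(RealRMK.rieszMeasure Λ) = L (continuousMapEquiv ⟨g, hg.1⟩) :=
        RealRMK.integral_rieszMeasure Λ (continuousMapEquiv ⟨g, hg.1⟩)
    _ ≤ upperIntegral μ g := hLN _
    _ ≤ ∫ ζ, g ζ ∂μ := upperIntegral_le μ hg.1 hg fun _ => le_rfl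

end Measure

end

theorem stmt15_general {M : Type*} [MetricSpace M]
    [MeasurableSpace (StoneCech (Wt M))] [BorelSpace (StoneCech (Wt M))]
    (μ : Measure (StoneCech (Wt M))) [IsFiniteMeasure μ] :
    IsMinimal μ ↔
      ∀ f : StoneCech (Wt M) → ℝ, Continuous f →
        (∀ ζ ω : StoneCech (Wt M), (∀ g ∈ GSet M, g ζ = g ω) → f ζ = f ω) →
        ∫ ζ, f ζ ∂μ =
          sInf {r : ℝ | ∃ g ∈ GSet M, (∀ ζ, f ζ ≤ g ζ) ∧ r = ∫ ζ, g ζ ∂μ} := by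
  constructor
  · intro hmin f hf hconst
    obtain ⟨ν, hν, hνreg, hνμ, hfν⟩ := exists_preceq_integral_eq_upperIntegral μ hf
    have hμν := hmin ν hν hνreg hνμ
    rw [integral_eq_of_integral_GSet_eq μ (fun g hg => (hμν g hg).antisymm (hνμ g hg)) hf hconst]
    exact hfν
  · intro h ν _ _ hνμ g hg
    have hμ := h (-g) hg.1.neg fun ζ ω hζω => by rw [Pi.neg_apply, Pi.neg_apply, hζω g hg]
    have hν := integral_le_upperIntegral μ hνμ hg.1.neg
    rw [upperIntegral, ← hμ] at hν
    simpa [integral_neg] using hν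

theorem stmt15 {M : Type*} [MetricSpace M]
    [MeasurableSpace (StoneCech (Wt M))] [BorelSpace (StoneCech (Wt M))]
    (h3 : ∃ x y z : M, x ≠ y ∧ x ≠ z ∧ y ≠ z)
    (μ : Measure (StoneCech (Wt M))) [IsFiniteMeasure μ] [μ.InnerRegular] :
    IsMinimal μ ↔
      ∀ f : StoneCech (Wt M) → ℝ, Continuous f →
        (∀ ζ ω : StoneCech (Wt M), (∀ g ∈ GSet M, g ζ = g ω) → f ζ = f ω) →
        ∫ ζ, f ζ ∂μ =
          sInf {r : ℝ | ∃ g ∈ GSet M, (∀ ζ, f ζ ≤ g ζ) ∧ r = ∫ ζ, g ζ ∂μ} :=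
  stmt15_general μ
end
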